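/- In the super tensor cube of End(ℂ^{N|N}), with P and Q as above, the three products P₁₂ P₁₃ Q₂₃, P₂₃ Q₁₃ P₁₂, and Q₁₂ P₁₃ P₂₃ are all equal, and each equals -Q₁₂ Q₁₃ Q₂₃. -/

import Mathlib

open Matrix BigOperators

/-- Index set `{±1, …, ±N}`: `inl k` is the positive index `k+1`, `inr k` the negative `-(k+1)`. -/
abbrev Idx (N : ℕ) := Fin N ⊕ Fin N

/-- Parity: `0` for positive indices, `1` for negative ones. -/
def par {N : ℕ} : Idx N → ℕ := Sum.elim (fun _ => 0) (fun _ => 1)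

/-- Negation `i ↦ -i` on the index set. -/
def nn {N : ℕ} : Idx N → Idx N := Sum.swap

/-- The super (Koszul-signed) tensor product `A ⊗ B ⊗ C` of three matrices, realized as an
operator on `(ℂ^{N|N})^{⊗3}`:
`(X⊗Y⊗Z)(x⊗y⊗z) = (-1)^{deg x (deg Y + deg Z) + deg y · deg Z} Xx ⊗ Yy ⊗ Zz`. -/
def stp3 {N : ℕ} (A B C : Matrix (Idx N) (Idx N) ℂ) :
    Matrix (Idx N × Idx N × Idx N) (Idx N × Idx N × Idx N) ℂ :=
  Matrix.of fun r c =>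
    A r.1 c.1 * B r.2.1 c.2.1 * C r.2.2 c.2.2 *
      (-1 : ℂ) ^ (par c.1 * (par r.2.1 + par c.2.1 + par r.2.2 + par c.2.2) +
        par c.2.1 * (par r.2.2 + par c.2.2))

/-- `P₁₂`: the element `P = Σ_{i,j} (-1)^{p(j)} E_{ij} ⊗ E_{ji}` placed in factors 1, 2. -/
noncomputable def P12 (N : ℕ) : Matrix (Idx N × Idx N × Idx N) (Idx N × Idx N × Idx N) ℂ :=
  ∑ i : Idx N, ∑ j : Idx N,
    ((-1 : ℂ) ^ par j) • stp3 (Matrix.single i j 1) (Matrix.single j i 1) 1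

/-- `P₁₃`: `P` placed in factors 1, 3. -/
noncomputable def P13 (N : ℕ) : Matrix (Idx N × Idx N × Idx N) (Idx N × Idx N × Idx N) ℂ :=
  ∑ i : Idx N, ∑ j : Idx N,
    ((-1 : ℂ) ^ par j) • stp3 (Matrix.single i j 1) 1 (Matrix.single j i 1)

/-- `P₂₃`: `P` placed in factors 2, 3. -/
noncomputable def P23 (N : ℕ) : Matrix (Idx N × Idx N × Idx N) (Idx N × Idx N × Idx N) ℂ :=
  ∑ i : Idx N, ∑ j : Idx N,
    ((-1 : ℂ) ^ par j) • stp3 1 (Matrix.single i j 1) (Matrix.single j i 1)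

/-- `Q₁₂`: the element `Q = Σ_{i,j} (-1)^{p(i)p(j)+p(i)+p(j)} E_{ij} ⊗ E_{-i,-j}`
placed in factors 1, 2. -/
noncomputable def Q12 (N : ℕ) : Matrix (Idx N × Idx N × Idx N) (Idx N × Idx N × Idx N) ℂ :=
  ∑ i : Idx N, ∑ j : Idx N,
    ((-1 : ℂ) ^ (par i * par j + par i + par j)) •
      stp3 (Matrix.single i j 1) (Matrix.single (nn i) (nn j) 1) 1

/-- `Q₁₃`: `Q` placed in factors 1, 3. -/
noncomputable def Q13 (N : ℕ) : Matrix (Idx N × Idx N × Idx N) (Idx N × Idx N × Idx N) ℂ :=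
  ∑ i : Idx N, ∑ j : Idx N,
    ((-1 : ℂ) ^ (par i * par j + par i + par j)) •
      stp3 (Matrix.single i j 1) 1 (Matrix.single (nn i) (nn j) 1)

/-- `Q₂₃`: `Q` placed in factors 2, 3. -/
noncomputable def Q23 (N : ℕ) : Matrix (Idx N × Idx N × Idx N) (Idx N × Idx N × Idx N) ℂ :=
  ∑ i : Idx N, ∑ j : Idx N,
    ((-1 : ℂ) ^ (par i * par j + par i + par j)) •
      stp3 1 (Matrix.single i j 1) (Matrix.single (nn i) (nn j) 1)

lemma P12_apply {N : ℕ} (a b c d e f : Idx N) :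
    P12 N (a,b,c) (d,e,f) =
      if d = b ∧ e = a ∧ f = c then (-1:ℂ)^(par a * par b) else 0 := by
  unfold P12
  simp only [Matrix.sum_apply, Matrix.smul_apply, stp3, Matrix.of_apply,
    Matrix.single, Matrix.one_apply, smul_eq_mul]
  rw [Finset.sum_eq_single a]; rotate_left
  · intro i _ hi; simp [hi]
  · simp
  rw [Finset.sum_eq_single d]; rotate_left
  · intro j _ hj; simp [hj]
  · simp
  by_cases h1 : d = b <;> by_cases h2 : e = a <;> by_cases h3 : f = c
  case pos =>
    subst h1 h2 h3
    simp only [and_self, if_true, eq_self_iff_true, true_and, and_true, if_pos rfl, mul_one, one_mul]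
    rcases d with d | d <;> rcases e with e | e <;> rcases f with f | f <;>
      simp [par] <;> norm_num
  all_goals simp_all [eq_comm]
lemma P13_apply {N : ℕ} (a b c d e f : Idx N) :
    P13 N (a,b,c) (d,e,f) =
      if d = c ∧ e = b ∧ f = a then
        (-1:ℂ)^(par a * par b + par a * par c + par b * par c) else 0 := by
  unfold P13
  simp only [Matrix.sum_apply, Matrix.smul_apply, stp3, Matrix.of_apply,
    Matrix.single, Matrix.one_apply, smul_eq_mul]
  rw [Finset.sum_eq_single a]; rotate_left
  · intro i _ hi; simp [hi]
  · simp
  rw [Finset.sum_eq_single d]; rotate_left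
  · intro j _ hj; simp [hj]
  · simp
  by_cases h1 : d = c <;> by_cases h2 : e = b <;> by_cases h3 : f = a
  case pos =>
    subst h1 h2 h3
    simp only [and_self, if_true, eq_self_iff_true, true_and, and_true, if_pos rfl, mul_one, one_mul]
    rcases d with d | d <;> rcases e with e | e <;> rcases f with f | f <;>
      simp [par] <;> norm_num
  all_goals simp_all [eq_comm]

lemma P23_apply {N : ℕ} (a b c d e f : Idx N) :
    P23 N (a,b,c) (d,e,f) =
      if d = a ∧ e = c ∧ f = b then (-1:ℂ)^(par b * par c) else 0 := by
  unfold P23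
  simp only [Matrix.sum_apply, Matrix.smul_apply, stp3, Matrix.of_apply,
    Matrix.single, Matrix.one_apply, smul_eq_mul]
  rw [Finset.sum_eq_single b]; rotate_left
  · intro i _ hi; simp [hi]
  · simp
  rw [Finset.sum_eq_single e]; rotate_left
  · intro j _ hj; simp [hj]
  · simp
  by_cases h1 : d = a <;> by_cases h2 : e = c <;> by_cases h3 : f = b
  case pos =>
    subst h1 h2 h3
    simp only [and_self, if_true, eq_self_iff_true, true_and, and_true, if_pos rfl, mul_one, one_mul]
    rcases d with d | d <;> rcases e with e | e <;> rcases f with f | f <;>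
      simp [par] <;> norm_num
  all_goals simp_all [eq_comm]

lemma Q12_apply {N : ℕ} (a b c d e f : Idx N) :
    Q12 N (a,b,c) (d,e,f) =
      if b = nn a ∧ e = nn d ∧ f = c then (-1:ℂ)^(par a) else 0 := by
  unfold Q12
  simp only [Matrix.sum_apply, Matrix.smul_apply, stp3, Matrix.of_apply,
    Matrix.single, Matrix.one_apply, smul_eq_mul]
  rw [Finset.sum_eq_single a]; rotate_left
  · intro i _ hi; simp [hi]
  · simp
  rw [Finset.sum_eq_single d]; rotate_left
  · intro j _ hj; simp [hj]
  · simp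
  by_cases h1 : b = nn a <;> by_cases h2 : e = nn d <;> by_cases h3 : f = c
  case pos =>
    subst h1 h2 h3
    simp only [and_self, if_true, eq_self_iff_true, true_and, and_true, if_pos rfl, mul_one, one_mul]
    rcases a with a | a <;> rcases d with d | d <;> rcases f with f | f <;>
      simp [par, nn] <;> norm_num
  all_goals simp_all [eq_comm]

lemma Q13_apply {N : ℕ} (a b c d e f : Idx N) :
    Q13 N (a,b,c) (d,e,f) =
      if c = nn a ∧ e = b ∧ f = nn d then
        (-1:ℂ)^(par a + par a * par b + par b * par d) else 0 := by
  unfold Q13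
  simp only [Matrix.sum_apply, Matrix.smul_apply, stp3, Matrix.of_apply,
    Matrix.single, Matrix.one_apply, smul_eq_mul]
  rw [Finset.sum_eq_single a]; rotate_left
  · intro i _ hi; simp [hi]
  · simp
  rw [Finset.sum_eq_single d]; rotate_left
  · intro j _ hj; simp [hj]
  · simp
  by_cases h1 : c = nn a <;> by_cases h2 : e = b <;> by_cases h3 : f = nn d
  case pos =>
    subst h1 h2 h3
    simp only [and_self, if_true, eq_self_iff_true, true_and, and_true, if_pos rfl, mul_one, one_mul]
    rcases a with a | a <;> rcases d with d | d <;> rcases e with e | e <;>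
      simp [par, nn] <;> norm_num
  all_goals simp_all [eq_comm]

lemma Q23_apply {N : ℕ} (a b c d e f : Idx N) :
    Q23 N (a,b,c) (d,e,f) =
      if d = a ∧ c = nn b ∧ f = nn e then (-1:ℂ)^(par b) else 0 := by
  unfold Q23
  simp only [Matrix.sum_apply, Matrix.smul_apply, stp3, Matrix.of_apply,
    Matrix.single, Matrix.one_apply, smul_eq_mul]
  rw [Finset.sum_eq_single b]; rotate_left
  · intro i _ hi; simp [hi]
  · simp
  rw [Finset.sum_eq_single e]; rotate_left
  · intro j _ hj; simp [hj]
  · simp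
  by_cases h1 : d = a <;> by_cases h2 : c = nn b <;> by_cases h3 : f = nn e
  case pos =>
    subst h1 h2 h3
    simp only [and_self, if_true, eq_self_iff_true, true_and, and_true, if_pos rfl, mul_one, one_mul]
    rcases b with b | b <;> rcases d with d | d <;> rcases e with e | e <;>
      simp [par, nn] <;> norm_num
  all_goals simp_all [eq_comm]
lemma nn_nn {N : ℕ} (x : Idx N) : nn (nn x) = x := by cases x <;> rfl

lemma PP_apply {N : ℕ} (a b c d e f : Idx N) :
    (P12 N * P13 N) (a,b,c) (d,e,f) =
      if d = c ∧ e = a ∧ f = b then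
        (-1:ℂ)^(par a * par b) *
          (-1:ℂ)^(par b * par a + par b * par c + par a * par c) else 0 := by
  rw [Matrix.mul_apply]
  simp only [Fintype.sum_prod_type, P12_apply, P13_apply]
  rw [Finset.sum_eq_single b]; rotate_left
  · intro x _ hx; simp [hx]
  · simp
  rw [Finset.sum_eq_single a]; rotate_left
  · intro x _ hx; simp [hx]
  · simp
  rw [Finset.sum_eq_single c]; rotate_left
  · intro x _ hx; simp [hx]
  · simp
  simp only [eq_self_iff_true, and_self, if_true, true_and, and_true]
  split_ifs <;> ring

lemma PQ_apply {N : ℕ} (a b c d e f : Idx N) :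
    (P23 N * Q13 N) (a,b,c) (d,e,f) =
      if b = nn a ∧ e = c ∧ f = nn d then
        (-1:ℂ)^(par b * par c) *
          (-1:ℂ)^(par a + par a * par c + par c * par d) else 0 := by
  rw [Matrix.mul_apply]
  simp only [Fintype.sum_prod_type, P23_apply, Q13_apply]
  rw [Finset.sum_eq_single a]; rotate_left
  · intro x _ hx; simp [hx]
  · simp
  rw [Finset.sum_eq_single c]; rotate_left
  · intro x _ hx; simp [hx]
  · simp
  rw [Finset.sum_eq_single b]; rotate_left
  · intro x _ hx; simp [hx]
  · simp
  simp only [eq_self_iff_true, and_self, if_true, true_and, and_true]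
  split_ifs <;> ring

lemma QP_apply {N : ℕ} (a b c d e f : Idx N) :
    (Q12 N * P13 N) (a,b,c) (d,e,f) =
      if b = nn a ∧ d = c ∧ e = nn f then
        (-1:ℂ)^(par a) *
          (-1:ℂ)^(par f * par (nn f) + par f * par c + par (nn f) * par c) else 0 := by
  rw [Matrix.mul_apply]
  simp only [Fintype.sum_prod_type, Q12_apply, P13_apply]
  rw [Finset.sum_eq_single f]; rotate_left
  · intro x _ hx; simp [Ne.symm hx]
  · simp
  rw [Finset.sum_eq_single (nn f)]; rotate_left
  · intro x _ hx; simp [hx]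
  · simp
  rw [Finset.sum_eq_single c]; rotate_left
  · intro x _ hx; simp [hx]
  · simp
  simp only [eq_self_iff_true, and_self, if_true, true_and, and_true]
  split_ifs <;> simp_all <;> ring

lemma QQ_apply {N : ℕ} (a b c d e f : Idx N) :
    (Q12 N * Q13 N) (a,b,c) (d,e,f) =
      if b = nn a ∧ e = c ∧ f = nn d then
        (-1:ℂ)^(par a) *
          (-1:ℂ)^(par (nn c) + par (nn c) * par c + par c * par d) else 0 := by
  rw [Matrix.mul_apply]
  simp only [Fintype.sum_prod_type, Q12_apply, Q13_apply]
  rw [Finset.sum_eq_single (nn c)]; rotate_left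
  · intro t1 _ hx
    apply Finset.sum_eq_zero; intro t2 _
    apply Finset.sum_eq_zero; intro t3 _
    split_ifs with h1 h2
    · exact absurd (by rw [← h1.2.2, h2.1, nn_nn]) hx
    all_goals ring
  · simp
  rw [Finset.sum_eq_single c]; rotate_left
  · intro x _ hx; simp [hx, nn_nn]
  · simp
  rw [Finset.sum_eq_single c]; rotate_left
  · intro x _ hx; simp [hx]
  · simp
  simp only [nn_nn, eq_self_iff_true, and_self, if_true, true_and, and_true]
  split_ifs <;> simp_all <;> ring
lemma nn_inj {N : ℕ} {x y : Idx N} : nn x = nn y ↔ x = y :=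
  ⟨fun h => by rw [← nn_nn x, h, nn_nn], fun h => by rw [h]⟩

lemma T1_apply {N : ℕ} (a b c d e f : Idx N) :
    (P12 N * P13 N * Q23 N) (a,b,c) (d,e,f) =
      if b = nn a ∧ d = c ∧ f = nn e then (-1:ℂ)^(par a + par c) else 0 := by
  rw [Matrix.mul_apply]
  simp only [Fintype.sum_prod_type, PP_apply, Q23_apply]
  rw [Finset.sum_eq_single c]; rotate_left
  · intro x _ hx; simp [hx]
  · simp
  rw [Finset.sum_eq_single a]; rotate_left
  · intro x _ hx; simp [hx]
  · simp
  rw [Finset.sum_eq_single b]; rotate_left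
  · intro x _ hx; simp [hx]
  · simp
  by_cases h1 : b = nn a <;> by_cases h2 : d = c <;> by_cases h3 : f = nn e
  case pos =>
    subst h1 h2 h3
    simp only [eq_self_iff_true, and_self, if_true, true_and, and_true, mul_one, one_mul]
    rcases a with a | a <;> rcases d with d | d <;> rcases e with e | e <;>
      simp [par, nn] <;> norm_num
  all_goals simp_all [eq_comm]

lemma T2_apply {N : ℕ} (a b c d e f : Idx N) :
    (P23 N * Q13 N * P12 N) (a,b,c) (d,e,f) =
      if b = nn a ∧ d = c ∧ f = nn e then (-1:ℂ)^(par a + par c) else 0 := by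
  rw [Matrix.mul_apply]
  simp only [Fintype.sum_prod_type, PQ_apply, P12_apply]
  rw [Finset.sum_eq_single e]; rotate_left
  · intro x _ hx; simp [Ne.symm hx]
  · simp
  rw [Finset.sum_eq_single c]; rotate_left
  · intro x _ hx; simp [hx]
  · simp
  rw [Finset.sum_eq_single (nn e)]; rotate_left
  · intro x _ hx; simp [hx]
  · simp
  by_cases h1 : b = nn a <;> by_cases h2 : d = c <;> by_cases h3 : f = nn e
  case pos =>
    subst h1 h2 h3
    simp only [eq_self_iff_true, and_self, if_true, true_and, and_true, mul_one, one_mul]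
    rcases a with a | a <;> rcases d with d | d <;> rcases e with e | e <;>
      simp [par, nn] <;> norm_num
  all_goals simp_all [eq_comm]

lemma T3_apply {N : ℕ} (a b c d e f : Idx N) :
    (Q12 N * P13 N * P23 N) (a,b,c) (d,e,f) =
      if b = nn a ∧ d = c ∧ f = nn e then (-1:ℂ)^(par a + par c) else 0 := by
  rw [Matrix.mul_apply]
  simp only [Fintype.sum_prod_type, QP_apply, P23_apply]
  rw [Finset.sum_eq_single c]; rotate_left
  · intro x _ hx; simp [hx]
  · simp
  rw [Finset.sum_eq_single f]; rotate_left
  · intro x _ hx; simp [Ne.symm hx]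
  · simp
  rw [Finset.sum_eq_single e]; rotate_left
  · intro x _ hx; simp [Ne.symm hx]
  · simp
  by_cases h1 : b = nn a <;> by_cases h2 : d = c <;> by_cases h3 : f = nn e
  case pos =>
    subst h1 h2 h3
    simp only [eq_self_iff_true, and_self, if_true, true_and, and_true, mul_one, one_mul]
    rcases a with a | a <;> rcases d with d | d <;> rcases e with e | e <;>
      simp [par, nn] <;> norm_num
  all_goals simp_all [eq_comm]

lemma T4_apply {N : ℕ} (a b c d e f : Idx N) :
    (Q12 N * Q13 N * Q23 N) (a,b,c) (d,e,f) =
      if b = nn a ∧ d = c ∧ f = nn e then -((-1:ℂ)^(par a + par c)) else 0 := by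
  rw [Matrix.mul_apply]
  simp only [Fintype.sum_prod_type, QQ_apply, Q23_apply]
  rw [Finset.sum_eq_single d]; rotate_left
  · intro x _ hx; simp [Ne.symm hx]
  · simp
  rw [Finset.sum_eq_single c]; rotate_left
  · intro x _ hx; simp [hx]
  · simp
  rw [Finset.sum_eq_single (nn d)]; rotate_left
  · intro x _ hx; simp [hx]
  · simp
  by_cases h1 : b = nn a <;> by_cases h2 : d = c <;> by_cases h3 : f = nn e
  case pos =>
    subst h1 h2 h3
    simp only [eq_self_iff_true, and_self, if_true, true_and, and_true, mul_one, one_mul]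
    rcases a with a | a <;> rcases d with d | d <;> rcases e with e | e <;>
      simp [par, nn] <;> norm_num
  all_goals simp_all [eq_comm, nn_inj]
/-- In the super tensor cube of `End(ℂ^{N|N})`:
`P₁₂ P₁₃ Q₂₃ = P₂₃ Q₁₃ P₁₂ = Q₁₂ P₁₃ P₂₃ = -Q₁₂ Q₁₃ Q₂₃`. -/
theorem stmt_11 (N : ℕ) :
    P12 N * P13 N * Q23 N = P23 N * Q13 N * P12 N ∧
    P12 N * P13 N * Q23 N = Q12 N * P13 N * P23 N ∧
    P12 N * P13 N * Q23 N = -(Q12 N * Q13 N * Q23 N) := by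
  refine ⟨?_, ?_, ?_⟩
  · ext ⟨a, b, c⟩ ⟨d, e, f⟩
    rw [T1_apply, T2_apply]
  · ext ⟨a, b, c⟩ ⟨d, e, f⟩
    rw [T1_apply, T3_apply]
  · ext ⟨a, b, c⟩ ⟨d, e, f⟩
    rw [T1_apply, Matrix.neg_apply, T4_apply]
    split_ifs <;> ring
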